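/- arXiv:2508.17301 — 4 statements merged into one kernel-verified Lean document; each statement's English description precedes it below -/
import Mathlib

section
/- For δ ∈ [0, 1/λ₁) set τ*(δ) := R_Π(p*(δ), δ), let R_V⁺(τ, δ) := sup{ R_V(p, δ) : p ∈ ℝⁿ, Π(p, δ) ≥ τ·Π(p^ur, δ) } (the supremum is finite for every τ ≤ 1 since the constraint set is compact), and define Gap(δ) := R_V⁺(τ*(δ), δ) − R_V(p*(δ), δ). Suppose there exists p̃ ∈ K with ⟨w₁, p̃⟩ = ⟨w₁, p^ur⟩ (the regulation is neutral in the limit). Then Gap(δ) ≥ 0 for all δ, and Gap(δ) → 0 as δ tends to 1/λ₁ from the left. -/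
open Matrix

noncomputable def Hmat {n : ℕ} (G : Matrix (Fin n) (Fin n) ℝ) (δ : ℝ) :
    Matrix (Fin n) (Fin n) ℝ :=
  (1 - δ • G)⁻¹

/-- Monopolist profit Π(p) = (p − c)ᵀ H (a − p). -/
noncomputable def profit {n : ℕ} (G : Matrix (Fin n) (Fin n) ℝ) (δ : ℝ)
    (a c p : Fin n → ℝ) : ℝ :=
  (p - c) ⬝ᵥ (Hmat G δ *ᵥ (a - p))

/-- Aggregate consumer surplus V(p) = (1/2)(a − p)ᵀ H² (a − p). -/
noncomputable def surplus {n : ℕ} (G : Matrix (Fin n) (Fin n) ℝ) (δ : ℝ)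
    (a p : Fin n → ℝ) : ℝ :=
  (1 / 2 : ℝ) * ((a - p) ⬝ᵥ ((Hmat G δ * Hmat G δ) *ᵥ (a - p)))

/-- Unrestricted optimal price p^ur = (a + c)/2. -/
noncomputable def pUR {n : ℕ} (a c : Fin n → ℝ) : Fin n → ℝ :=
  (1 / 2 : ℝ) • (a + c)

/-- The Pareto price family 𝕡(η). -/
noncomputable def pFam {n : ℕ} (G : Matrix (Fin n) (Fin n) ℝ) (δ : ℝ)
    (a c : Fin n → ℝ) (η : ℝ) : Fin n → ℝ :=
  pUR a c - (η / (2 - η)) • ((1 - (2 * δ / (2 - η)) • G)⁻¹ *ᵥ ((1 / 2 : ℝ) • (a - c)))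

/-- The all-ones vector 𝟙. -/
def onesVec (n : ℕ) : Fin n → ℝ := fun _ => 1

/-- The sufficient statistic 𝒜(p) = ⟨w₁, p − p^ur⟩ / ⟨w₁, (a−c)/2⟩. -/
noncomputable def AAstat {n : ℕ} (w1 a c p : Fin n → ℝ) : ℝ :=
  (w1 ⬝ᵥ (p - pUR a c)) / (w1 ⬝ᵥ ((1 / 2 : ℝ) • (a - c)))

/-- Profit ratio R_Π(p, δ). -/
noncomputable def Rpi {n : ℕ} (G : Matrix (Fin n) (Fin n) ℝ) (δ : ℝ)
    (a c p : Fin n → ℝ) : ℝ :=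
  profit G δ a c p / profit G δ a c (pUR a c)

/-- Consumer-surplus ratio R_V(p, δ). -/
noncomputable def Rv {n : ℕ} (G : Matrix (Fin n) (Fin n) ℝ) (δ : ℝ)
    (a c p : Fin n → ℝ) : ℝ :=
  surplus G δ a p / surplus G δ a (pUR a c)

/-- R_V⁺(τ, δ): the best consumer-surplus ratio subject to the profit floor Π(p) ≥ τ·Π(p^ur). -/
noncomputable def RVplus {n : ℕ} (G : Matrix (Fin n) (Fin n) ℝ) (δ : ℝ)
    (a c : Fin n → ℝ) (τ : ℝ) : ℝ :=
  sSup {x : ℝ | ∃ p : Fin n → ℝ,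
    τ * profit G δ a c (pUR a c) ≤ profit G δ a c p ∧ Rv G δ a c p = x}

/-- Gap(δ) = R_V⁺(τ*(δ), δ) − R_V(p*(δ), δ) with τ*(δ) = R_Π(p*(δ), δ). -/
noncomputable def Gap {n : ℕ} (G : Matrix (Fin n) (Fin n) ℝ) (δ : ℝ)
    (a c : Fin n → ℝ) (pstar : ℝ → Fin n → ℝ) : ℝ :=
  RVplus G δ a c (Rpi G δ a c (pstar δ)) - Rv G δ a c (pstar δ)

/-!
In the eigenbasis of `G` (`w 0` is the paper's `w₁`), `H = (1 - δG)⁻¹` is diagonal with entries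
`(1 - δλᵢ)⁻¹`, so with `x = p - p^ur` the profit is `Π(p) = Π(p^ur) - ⟪x, H x⟫` and the surplus is
`V(p) = ½‖H(a - p)‖²`. Since `p*` beats the neutral price `p̃`, every price feasible for
`R_V⁺(τ*)` has `⟪x, H x⟫ ≤ ⟪x̃, H x̃⟫`, where `x̃ = p̃ - p^ur` has no component along `w₁`; hence
`(1 - δλ₁)⟪x̃, H x̃⟫ → 0`. As `‖H x‖² ≤ (1 - δλ₁)⁻¹⟪x, H x⟫` and
`‖H(a - p^ur)‖ ≥ (1 - δλ₁)⁻¹⟪w₁, a - p^ur⟫`, the triangle inequality puts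
`√R_V(p) = ‖H(a - p)‖ / ‖H(a - p^ur)‖` within some `ρ(δ) → 0` of `1` for all these prices at
once, `p*` included, and the gap is at most `4ρ(1 + ρ)`.
-/

open Filter Topology

namespace Matrix

variable {ι R : Type*} [Fintype ι] [DecidableEq ι]

theorem dotProduct_transpose_mul_diagonal_mul_mulVec [CommSemiring R] (W : Matrix ι ι R)
    (d u v : ι → R) :
    u ⬝ᵥ ((Wᵀ * diagonal d * W) *ᵥ v) = ∑ i, d i * (W *ᵥ u) i * (W *ᵥ v) i := by
  rw [← mulVec_mulVec, ← mulVec_mulVec, dotProduct_mulVec, vecMul_transpose]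
  simp only [dotProduct, mulVec_diagonal]
  exact Finset.sum_congr rfl fun i _ => by ring

theorem transpose_mul_diagonal_mul_mul_transpose_mul_diagonal_mul [CommSemiring R]
    {W : Matrix ι ι R} (hW : W * Wᵀ = 1) (d e : ι → R) :
    (Wᵀ * diagonal d * W) * (Wᵀ * diagonal e * W) = Wᵀ * diagonal (d * e) * W := by
  calc (Wᵀ * diagonal d * W) * (Wᵀ * diagonal e * W)
      = Wᵀ * (diagonal d * (W * Wᵀ) * diagonal e) * W := by simp only [Matrix.mul_assoc]
    _ = Wᵀ * diagonal (d * e) * W := by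
      rw [hW, Matrix.mul_one, diagonal_mul_diagonal]; rfl

theorem inv_transpose_mul_diagonal_mul [Field R] {W : Matrix ι ι R} (hW : W * Wᵀ = 1)
    {d : ι → R} (hd : ∀ i, d i ≠ 0) :
    (Wᵀ * diagonal d * W)⁻¹ = Wᵀ * diagonal d⁻¹ * W := by
  apply inv_eq_right_inv
  rw [transpose_mul_diagonal_mul_mul_transpose_mul_diagonal_mul hW,
    show d * d⁻¹ = fun _ => 1 from funext fun i => mul_inv_cancel₀ (hd i), diagonal_one,
    Matrix.mul_one, mul_eq_one_comm.mp hW]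

end Matrix

section Spectral

variable {n : ℕ} {G : Matrix (Fin n) (Fin n) ℝ} {w : Fin n → Fin n → ℝ} {lam : Fin n → ℝ}

theorem of_mul_transpose_eq_one (horth : ∀ i j, w i ⬝ᵥ w j = if i = j then (1 : ℝ) else 0) :
    of w * (of w)ᵀ = 1 := by
  ext i j
  simpa [Matrix.mul_apply, Matrix.one_apply, dotProduct] using horth i j

theorem eq_transpose_mul_diagonal_mul
    (horth : ∀ i j, w i ⬝ᵥ w j = if i = j then (1 : ℝ) else 0)
    (heig : ∀ i, G *ᵥ w i = lam i • w i) :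
    G = (of w)ᵀ * diagonal lam * of w := by
  have hGW : G * (of w)ᵀ = (of w)ᵀ * diagonal lam := by
    ext k i
    simpa [Matrix.mul_apply, mulVec, dotProduct, diagonal_apply, mul_comm] using congrFun (heig i) k
  calc G = G * ((of w)ᵀ * of w) := by
        rw [mul_eq_one_comm.mp (of_mul_transpose_eq_one horth), Matrix.mul_one]
    _ = (of w)ᵀ * diagonal lam * of w := by rw [← Matrix.mul_assoc, hGW]

theorem Hmat_eq_transpose_mul_diagonal_mul
    (horth : ∀ i j, w i ⬝ᵥ w j = if i = j then (1 : ℝ) else 0)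
    (heig : ∀ i, G *ᵥ w i = lam i • w i) {δ : ℝ} (hne : ∀ i, 1 - δ * lam i ≠ 0) :
    Hmat G δ = (of w)ᵀ * diagonal (fun i => (1 - δ * lam i)⁻¹) * of w := by
  have hW := of_mul_transpose_eq_one horth
  have h : (1 : Matrix (Fin n) (Fin n) ℝ) - δ • G
      = (of w)ᵀ * diagonal (fun i => 1 - δ * lam i) * of w := by
    have hdiag : diagonal (fun i => 1 - δ * lam i) = 1 - δ • diagonal lam := by
      rw [← diagonal_one, ← diagonal_smul, diagonal_sub]; rfl
    rw [hdiag, Matrix.mul_sub, Matrix.sub_mul, Matrix.mul_one, mul_eq_one_comm.mp hW,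
      Matrix.mul_smul, Matrix.smul_mul, ← eq_transpose_mul_diagonal_mul horth heig]
  rw [Hmat, h, inv_transpose_mul_diagonal_mul hW hne]
  rfl

theorem dotProduct_Hmat_mulVec
    (horth : ∀ i j, w i ⬝ᵥ w j = if i = j then (1 : ℝ) else 0)
    (heig : ∀ i, G *ᵥ w i = lam i • w i) {δ : ℝ} (hne : ∀ i, 1 - δ * lam i ≠ 0)
    (u v : Fin n → ℝ) :
    u ⬝ᵥ (Hmat G δ *ᵥ v) = ∑ i, (1 - δ * lam i)⁻¹ * (w i ⬝ᵥ u) * (w i ⬝ᵥ v) := by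
  rw [Hmat_eq_transpose_mul_diagonal_mul horth heig hne,
    dotProduct_transpose_mul_diagonal_mul_mulVec]
  rfl

theorem dotProduct_Hmat_mul_Hmat_mulVec
    (horth : ∀ i j, w i ⬝ᵥ w j = if i = j then (1 : ℝ) else 0)
    (heig : ∀ i, G *ᵥ w i = lam i • w i) {δ : ℝ} (hne : ∀ i, 1 - δ * lam i ≠ 0)
    (u v : Fin n → ℝ) :
    u ⬝ᵥ ((Hmat G δ * Hmat G δ) *ᵥ v)
      = ∑ i, (1 - δ * lam i)⁻¹ ^ 2 * (w i ⬝ᵥ u) * (w i ⬝ᵥ v) := by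
  rw [Hmat_eq_transpose_mul_diagonal_mul horth heig hne,
    transpose_mul_diagonal_mul_mul_transpose_mul_diagonal_mul (of_mul_transpose_eq_one horth),
    dotProduct_transpose_mul_diagonal_mul_mulVec]
  simp only [Pi.mul_apply, sq]
  rfl

end Spectral

theorem sSup_sub_mem_Icc_of_subset_image_sq {S : Set ℝ} {x₀ ρ : ℝ} (hx₀ : x₀ ∈ S)
    (hS : S ⊆ (· ^ 2) '' Metric.closedBall 1 ρ) :
    sSup S - x₀ ∈ Set.Icc 0 (4 * ρ * (1 + ρ)) := by
  have hbdd : ∀ x ∈ S, x ≤ (1 + ρ) ^ 2 := by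
    intro x hx
    obtain ⟨r, hr, rfl⟩ := hS hx
    rw [Metric.mem_closedBall, Real.dist_eq] at hr
    nlinarith [abs_le.1 hr]
  obtain ⟨s, hs, rfl⟩ := hS hx₀
  rw [Metric.mem_closedBall, Real.dist_eq] at hs
  have hsup := csSup_le ⟨_, hx₀⟩ hbdd
  refine ⟨sub_nonneg.2 (le_csSup ⟨_, hbdd⟩ hx₀), ?_⟩
  nlinarith [abs_le.1 hs]

section Market

variable {n : ℕ} {G : Matrix (Fin n) (Fin n) ℝ} {w : Fin n → Fin n → ℝ} {lam : Fin n → ℝ}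
  {δ : ℝ} {a c : Fin n → ℝ} {j : Fin n}

/-- `Hmat G δ *ᵥ y` in the coordinates of the eigenbasis `w`, as a Euclidean vector. -/
noncomputable def eigenHmul (w : Fin n → Fin n → ℝ) (lam : Fin n → ℝ) (δ : ℝ)
    (y : Fin n → ℝ) : EuclideanSpace ℝ (Fin n) :=
  WithLp.toLp 2 fun i => (1 - δ * lam i)⁻¹ * (w i ⬝ᵥ y)

theorem eigenHmul_sub (y z : Fin n → ℝ) :
    eigenHmul w lam δ (y - z) = eigenHmul w lam δ y - eigenHmul w lam δ z := by
  ext i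
  simp [eigenHmul, dotProduct_sub, mul_sub]

theorem norm_eigenHmul_sq_le (horth : ∀ i j, w i ⬝ᵥ w j = if i = j then (1 : ℝ) else 0)
    (heig : ∀ i, G *ᵥ w i = lam i • w i) (hε : 0 < 1 - δ * lam j)
    (hle : ∀ i, 1 - δ * lam j ≤ 1 - δ * lam i) (y : Fin n → ℝ) :
    ‖eigenHmul w lam δ y‖ ^ 2 ≤ (1 - δ * lam j)⁻¹ * (y ⬝ᵥ (Hmat G δ *ᵥ y)) := by
  have hpos i : 0 < 1 - δ * lam i := hε.trans_le (hle i)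
  rw [EuclideanSpace.real_norm_sq_eq, dotProduct_Hmat_mulVec horth heig (fun i => (hpos i).ne'),
    Finset.mul_sum]
  refine Finset.sum_le_sum fun i _ => ?_
  have hi : (1 - δ * lam i)⁻¹ ≤ (1 - δ * lam j)⁻¹ := inv_anti₀ hε (hle i)
  calc (eigenHmul w lam δ y i) ^ 2
        = (1 - δ * lam i)⁻¹ * ((1 - δ * lam i)⁻¹ * (w i ⬝ᵥ y) ^ 2) := by
        simp only [eigenHmul, PiLp.toLp_apply]; ring
    _ ≤ (1 - δ * lam j)⁻¹ * ((1 - δ * lam i)⁻¹ * (w i ⬝ᵥ y) ^ 2) := by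
        have := (hpos i).le; gcongr
    _ = (1 - δ * lam j)⁻¹ * ((1 - δ * lam i)⁻¹ * (w i ⬝ᵥ y) * (w i ⬝ᵥ y)) := by ring

theorem surplus_eq_half_norm_eigenHmul_sq
    (horth : ∀ i j, w i ⬝ᵥ w j = if i = j then (1 : ℝ) else 0)
    (heig : ∀ i, G *ᵥ w i = lam i • w i) (hne : ∀ i, 1 - δ * lam i ≠ 0) (p : Fin n → ℝ) :
    surplus G δ a p = 1 / 2 * ‖eigenHmul w lam δ (a - p)‖ ^ 2 := by
  rw [surplus, dotProduct_Hmat_mul_Hmat_mulVec horth heig hne, EuclideanSpace.real_norm_sq_eq]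
  congr 1
  exact Finset.sum_congr rfl fun i _ => by simp only [eigenHmul, PiLp.toLp_apply]; ring

theorem Rv_eq_sq (horth : ∀ i j, w i ⬝ᵥ w j = if i = j then (1 : ℝ) else 0)
    (heig : ∀ i, G *ᵥ w i = lam i • w i) (hne : ∀ i, 1 - δ * lam i ≠ 0) (p : Fin n → ℝ) :
    Rv G δ a c p
      = (‖eigenHmul w lam δ (a - p)‖ / ‖eigenHmul w lam δ (a - pUR a c)‖) ^ 2 := by
  rw [Rv, surplus_eq_half_norm_eigenHmul_sq horth heig hne,
    surplus_eq_half_norm_eigenHmul_sq horth heig hne, div_pow,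
    mul_div_mul_left _ _ (by norm_num)]

theorem profit_eq_sub (horth : ∀ i j, w i ⬝ᵥ w j = if i = j then (1 : ℝ) else 0)
    (heig : ∀ i, G *ᵥ w i = lam i • w i) (hne : ∀ i, 1 - δ * lam i ≠ 0) (p : Fin n → ℝ) :
    profit G δ a c p = (a - pUR a c) ⬝ᵥ (Hmat G δ *ᵥ (a - pUR a c))
      - (p - pUR a c) ⬝ᵥ (Hmat G δ *ᵥ (p - pUR a c)) := by
  have hpc : p - c = (a - pUR a c) + (p - pUR a c) := by
    ext k; simp only [pUR, Pi.add_apply, Pi.sub_apply, Pi.smul_apply, smul_eq_mul]; ring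
  rw [profit, hpc, ← sub_sub_sub_cancel_right a p (pUR a c)]
  simp only [dotProduct_Hmat_mulVec horth heig hne, ← Finset.sum_sub_distrib, dotProduct_add,
    dotProduct_sub]
  exact Finset.sum_congr rfl fun i _ => by ring

theorem profit_pUR_pos (horth : ∀ i j, w i ⬝ᵥ w j = if i = j then (1 : ℝ) else 0)
    (heig : ∀ i, G *ᵥ w i = lam i • w i) (hε : 0 < 1 - δ * lam j)
    (hle : ∀ i, 1 - δ * lam j ≤ 1 - δ * lam i) (hμ : 0 < w j ⬝ᵥ (a - pUR a c)) :
    0 < profit G δ a c (pUR a c) := by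
  have hpos i : 0 < 1 - δ * lam i := hε.trans_le (hle i)
  have hne i : 1 - δ * lam i ≠ 0 := (hpos i).ne'
  rw [profit_eq_sub horth heig hne, sub_self, zero_dotProduct, sub_zero,
    dotProduct_Hmat_mulVec horth heig hne]
  refine Finset.sum_pos' (fun i _ => ?_) ⟨j, Finset.mem_univ _, ?_⟩
  · rw [mul_assoc]
    exact mul_nonneg (inv_nonneg.2 (hpos i).le) (mul_self_nonneg _)
  · rw [mul_assoc]
    exact mul_pos (inv_pos.2 hε) (mul_pos hμ hμ)

theorem Rv_mem_image_sq_closedBall (horth : ∀ i j, w i ⬝ᵥ w j = if i = j then (1 : ℝ) else 0)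
    (heig : ∀ i, G *ᵥ w i = lam i • w i) (hε : 0 < 1 - δ * lam j)
    (hle : ∀ i, 1 - δ * lam j ≤ 1 - δ * lam i) (hμ : 0 < w j ⬝ᵥ (a - pUR a c))
    {p q : Fin n → ℝ} (hpq : profit G δ a c q ≤ profit G δ a c p) :
    Rv G δ a c p ∈ (· ^ 2) '' Metric.closedBall 1
      √((1 - δ * lam j) * ((q - pUR a c) ⬝ᵥ (Hmat G δ *ᵥ (q - pUR a c)))
        / (w j ⬝ᵥ (a - pUR a c)) ^ 2) := by
  have hne i : 1 - δ * lam i ≠ 0 := (hε.trans_le (hle i)).ne'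
  set u := eigenHmul w lam δ (a - pUR a c)
  set v := eigenHmul w lam δ (p - pUR a c)
  have hd : 0 < (1 - δ * lam j)⁻¹ * (w j ⬝ᵥ (a - pUR a c)) := mul_pos (inv_pos.2 hε) hμ
  have hu : (1 - δ * lam j)⁻¹ * (w j ⬝ᵥ (a - pUR a c)) ≤ ‖u‖ := by
    have := PiLp.norm_apply_le u j
    rwa [Real.norm_eq_abs,
      show u j = (1 - δ * lam j)⁻¹ * (w j ⬝ᵥ (a - pUR a c)) from rfl, abs_of_pos hd] at this
  have hu0 : 0 < ‖u‖ := hd.trans_le hu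
  have hv : ‖v‖ ^ 2 ≤ (1 - δ * lam j)⁻¹ * ((q - pUR a c) ⬝ᵥ (Hmat G δ *ᵥ (q - pUR a c))) := by
    refine (norm_eigenHmul_sq_le horth heig hε hle _).trans ?_
    rw [profit_eq_sub horth heig hne, profit_eq_sub horth heig hne] at hpq
    gcongr
    linarith
  refine ⟨‖u - v‖ / ‖u‖, ?_, ?_⟩
  · rw [Metric.mem_closedBall, Real.dist_eq]
    calc |‖u - v‖ / ‖u‖ - 1| ≤ ‖v‖ / ‖u‖ := by
          rw [div_sub_one hu0.ne', abs_div, abs_norm]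
          gcongr
          simpa using abs_norm_sub_norm_le (u - v) u
      _ ≤ _ := by
          refine (le_abs_self _).trans (Real.abs_le_sqrt ?_)
          calc (‖v‖ / ‖u‖) ^ 2 = ‖v‖ ^ 2 / ‖u‖ ^ 2 := div_pow _ _ _
            _ ≤ ‖v‖ ^ 2 / ((1 - δ * lam j)⁻¹ * (w j ⬝ᵥ (a - pUR a c))) ^ 2 :=
                div_le_div_of_nonneg_left (sq_nonneg _) (pow_pos hd 2) (pow_le_pow_left₀ hd.le hu 2)
            _ ≤ (1 - δ * lam j)⁻¹ * ((q - pUR a c) ⬝ᵥ (Hmat G δ *ᵥ (q - pUR a c)))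
                / ((1 - δ * lam j)⁻¹ * (w j ⬝ᵥ (a - pUR a c))) ^ 2 :=
                div_le_div_of_nonneg_right hv (sq_nonneg _)
            _ = _ := by field_simp
  · rw [Rv_eq_sq horth heig hne, ← sub_sub_sub_cancel_right a p (pUR a c), eigenHmul_sub]

end Market

section Limit

variable {n : ℕ} {G : Matrix (Fin n) (Fin n) ℝ} {w : Fin n → Fin n → ℝ} {lam : Fin n → ℝ}
  {j : Fin n}

theorem one_sub_mul_pos_and_le_of_mem_Ico (hgap : ∀ i, i ≠ j → lam i < lam j)
    (hlam : 0 < lam j) {δ : ℝ} (hδ : δ ∈ Set.Ico 0 (1 / lam j)) :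
    0 < 1 - δ * lam j ∧ ∀ i, 1 - δ * lam j ≤ 1 - δ * lam i := by
  obtain ⟨hδ0, hδ1⟩ := hδ
  refine ⟨by linarith [(lt_div_iff₀ hlam).1 hδ1], fun i => ?_⟩
  rcases eq_or_ne i j with rfl | hi
  · rfl
  · linarith [mul_le_mul_of_nonneg_left (hgap i hi).le hδ0]

theorem tendsto_one_sub_mul_dotProduct_Hmat_mulVec
    (horth : ∀ i j, w i ⬝ᵥ w j = if i = j then (1 : ℝ) else 0)
    (heig : ∀ i, G *ᵥ w i = lam i • w i) (hgap : ∀ i, i ≠ j → lam i < lam j)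
    (hlam : 0 < lam j) {y : Fin n → ℝ} (hy : w j ⬝ᵥ y = 0) :
    Tendsto (fun δ => (1 - δ * lam j) * (y ⬝ᵥ (Hmat G δ *ᵥ y)))
      (𝓝[Set.Ico 0 (1 / lam j)] (1 / lam j)) (𝓝 0) := by
  have hsum : Tendsto (fun δ => ∑ i, (1 - δ * lam j) * (1 - δ * lam i)⁻¹ * (w i ⬝ᵥ y) ^ 2)
      (𝓝 (1 / lam j)) (𝓝 0) := by
    rw [show (0 : ℝ) = ∑ _i : Fin n, 0 by simp]
    refine tendsto_finsetSum _ fun i _ => ?_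
    rcases eq_or_ne i j with rfl | hi
    · simp [hy]
    · have hd : 1 - 1 / lam j * lam i ≠ 0 := by
        rw [one_div, inv_mul_eq_div, sub_ne_zero, ne_comm, ne_eq, div_eq_one_iff_eq hlam.ne']
        exact (hgap i hi).ne
      have hc : ContinuousAt (fun δ => (1 - δ * lam j) * (1 - δ * lam i)⁻¹ * (w i ⬝ᵥ y) ^ 2)
          (1 / lam j) := by
        fun_prop (disch := exact hd)
      simpa [hlam.ne'] using hc.tendsto
  refine (hsum.mono_left nhdsWithin_le_nhds).congr' ?_
  filter_upwards [self_mem_nhdsWithin] with δ hδ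
  obtain ⟨hε, hle⟩ := one_sub_mul_pos_and_le_of_mem_Ico hgap hlam hδ
  rw [dotProduct_Hmat_mulVec horth heig (fun i => (hε.trans_le (hle i)).ne'), Finset.mul_sum]
  exact Finset.sum_congr rfl fun i _ => by ring

end Limit

theorem stmt11_general {n : ℕ} [NeZero n]
    (G : Matrix (Fin n) (Fin n) ℝ)
    (w : Fin n → Fin n → ℝ) (lam : Fin n → ℝ)
    (horth : ∀ i j, w i ⬝ᵥ w j = if i = j then (1 : ℝ) else 0)
    (heig : ∀ i, G *ᵥ w i = lam i • w i)
    (hgap : ∀ i, i ≠ 0 → lam i < lam 0)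
    (hlam0 : 0 < lam 0)
    (hw0 : ∀ k, 0 < w 0 k)
    (a c : Fin n → ℝ) (hac : ∀ i, c i < a i)
    (K : Set (Fin n → ℝ))
    (pstar : ℝ → Fin n → ℝ)
    (hps : ∀ δ ∈ Set.Ico (0 : ℝ) (1 / lam 0),
      pstar δ ∈ K ∧ ∀ q ∈ K, profit G δ a c q ≤ profit G δ a c (pstar δ))
    (hneutral : ∃ pt ∈ K, w 0 ⬝ᵥ pt = w 0 ⬝ᵥ pUR a c) :
    (∀ δ ∈ Set.Ico (0 : ℝ) (1 / lam 0), 0 ≤ Gap G δ a c pstar) ∧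
    Filter.Tendsto (fun δ : ℝ => Gap G δ a c pstar)
      (nhdsWithin (1 / lam 0) (Set.Ico 0 (1 / lam 0))) (nhds 0) := by
  obtain ⟨pt, hptK, hpt⟩ := hneutral
  have hμ : 0 < w 0 ⬝ᵥ (a - pUR a c) :=
    Finset.sum_pos (fun k _ => mul_pos (hw0 k) (by
      simp only [pUR, Pi.sub_apply, Pi.smul_apply, Pi.add_apply, smul_eq_mul]
      linarith [hac k]))
      Finset.univ_nonempty
  set ρ := fun δ => √((1 - δ * lam 0) * ((pt - pUR a c) ⬝ᵥ (Hmat G δ *ᵥ (pt - pUR a c)))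
    / (w 0 ⬝ᵥ (a - pUR a c)) ^ 2)
  have hGap : ∀ δ ∈ Set.Ico (0 : ℝ) (1 / lam 0),
      Gap G δ a c pstar ∈ Set.Icc 0 (4 * ρ δ * (1 + ρ δ)) := by
    intro δ hδ
    obtain ⟨hε, hle⟩ := one_sub_mul_pos_and_le_of_mem_Ico hgap hlam0 hδ
    have hτ : Rpi G δ a c (pstar δ) * profit G δ a c (pUR a c) = profit G δ a c (pstar δ) :=
      div_mul_cancel₀ _ (profit_pUR_pos horth heig hε hle hμ).ne'
    refine sSup_sub_mem_Icc_of_subset_image_sq ⟨pstar δ, hτ.le, rfl⟩ ?_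
    rintro _ ⟨p, hp, rfl⟩
    exact Rv_mem_image_sq_closedBall horth heig hε hle hμ
      (((hps δ hδ).2 pt hptK).trans (hτ.symm.trans_le hp))
  have hρ : Tendsto ρ (𝓝[Set.Ico 0 (1 / lam 0)] (1 / lam 0)) (𝓝 0) := by
    simpa using ((tendsto_one_sub_mul_dotProduct_Hmat_mulVec horth heig hgap hlam0
      (by rw [dotProduct_sub, hpt, sub_self])).div_const _).sqrt
  refine ⟨fun δ hδ => (hGap δ hδ).1, ?_⟩
  refine tendsto_of_tendsto_of_tendsto_of_le_of_le' tendsto_const_nhds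
    (by simpa using (hρ.const_mul 4).mul (hρ.const_add 1))
    (eventually_nhdsWithin_of_forall fun δ hδ => (hGap δ hδ).1)
    (eventually_nhdsWithin_of_forall fun δ hδ => (hGap δ hδ).2)

theorem stmt11 {n : ℕ} [NeZero n]
    (G : Matrix (Fin n) (Fin n) ℝ) (hGsym : G.IsSymm)
    (hGnn : ∀ i j, 0 ≤ G i j) (hGdiag : ∀ i, G i i = 0)
    (w : Fin n → Fin n → ℝ) (lam : Fin n → ℝ)
    (horth : ∀ i j, w i ⬝ᵥ w j = if i = j then (1 : ℝ) else 0)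
    (heig : ∀ i, G *ᵥ w i = lam i • w i)
    (hgap : ∀ i, i ≠ 0 → lam i < lam 0)
    (hlam0 : 0 < lam 0)
    (hw0 : ∀ k, 0 < w 0 k)
    (hpd : ∀ δ ∈ Set.Ico (0 : ℝ) (1 / lam 0), (Hmat G δ).PosDef)
    (a c : Fin n → ℝ) (hac : ∀ i, c i < a i)
    (K : Set (Fin n → ℝ)) (hKne : K.Nonempty) (hKcl : IsClosed K) (hKconv : Convex ℝ K)
    (pstar : ℝ → Fin n → ℝ)
    (hps : ∀ δ ∈ Set.Ico (0 : ℝ) (1 / lam 0),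
      pstar δ ∈ K ∧ ∀ q ∈ K, profit G δ a c q ≤ profit G δ a c (pstar δ))
    (hneutral : ∃ pt ∈ K, w 0 ⬝ᵥ pt = w 0 ⬝ᵥ pUR a c) :
    (∀ δ ∈ Set.Ico (0 : ℝ) (1 / lam 0), 0 ≤ Gap G δ a c pstar) ∧
    Filter.Tendsto (fun δ : ℝ => Gap G δ a c pstar)
      (nhdsWithin (1 / lam 0) (Set.Ico 0 (1 / lam 0))) (nhds 0) :=
  stmt11_general G w lam horth heig hgap hlam0 hw0 a c hac K pstar hps hneutral
end

section
/- Write z̃ := z − (⟨z, 𝟙⟩/n)·𝟙 for the demeaned version of a vector z ∈ ℝⁿ. Then: (i) ⟨ψ, 𝟙⟩ = 0; (ii) if G is non-regular then w̃₁ ≠ 0 and ⟨ψ, w̃₁⟩ > 0; (iii) if G is non-regular, there exists ε > 0 such that for every a ∈ ℝⁿ with ã ≠ 0: if ⟨ã, w̃₁⟩ > (1 − ε)·‖ã‖·‖w̃₁‖ then ⟨ψ, a⟩ > 0, and if ⟨ã, w̃₁⟩ < (−1 + ε)·‖ã‖·‖w̃₁‖ then ⟨ψ, a⟩ < 0. 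-/
open Matrix

/-- The network statistic ψ. -/
noncomputable def psiVec {n : ℕ} [NeZero n] (w : Fin n → Fin n → ℝ)
    (lam : Fin n → ℝ) : Fin n → ℝ :=
  (∑ i ∈ Finset.univ.erase (0 : Fin n),
      (w i ⬝ᵥ onesVec n) ^ 2 / (1 - lam i / lam 0)) • w 0 -
    ∑ i ∈ Finset.univ.erase (0 : Fin n),
      ((w i ⬝ᵥ onesVec n) * (w 0 ⬝ᵥ onesVec n) / (1 - lam i / lam 0)) • w i

/-- The optimal uniform price p⁰(δ) (with c = 0). -/
noncomputable def p0fn {n : ℕ} (G : Matrix (Fin n) (Fin n) ℝ) (δ : ℝ)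
    (a : Fin n → ℝ) : Fin n → ℝ :=
  ((onesVec n ⬝ᵥ (Hmat G δ *ᵥ pUR a 0)) /
      (onesVec n ⬝ᵥ (Hmat G δ *ᵥ onesVec n))) • onesVec n

/-- The demeaned version z̃ = z − (⟨z, 𝟙⟩/n)·𝟙 of a vector z. -/
noncomputable def demean {n : ℕ} (z : Fin n → ℝ) : Fin n → ℝ :=
  z - ((z ⬝ᵥ onesVec n) / (n : ℝ)) • onesVec n

/-- Euclidean norm of a vector. -/
noncomputable def eNorm {n : ℕ} (z : Fin n → ℝ) : ℝ :=
  Real.sqrt (z ⬝ᵥ z)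

/-!
Pairing with `ψ` is a weighted sum of the antisymmetric forms
`z ↦ ⟨wᵢ, 𝟙⟩⟨w₁, z⟩ - ⟨w₁, 𝟙⟩⟨wᵢ, z⟩`, all of which vanish at `z = 𝟙`; hence `ψ ⊥ 𝟙` and `ψ`
only sees demeaned vectors. At `z = w₁` orthonormality leaves `Σ ⟨wᵢ, 𝟙⟩² / (1 - λᵢ/λ₁)`, which
is positive as soon as some `⟨wᵢ, 𝟙⟩ ≠ 0`, because the spectral gap makes every denominator
positive; and `w̃₁ ≠ 0`, since a nonzero multiple of `𝟙` is not orthogonal to such a `wᵢ`.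
Finally, `⟨ψ, ·⟩` is continuous and positive at `w̃₁ / ‖w̃₁‖`, so it stays positive on a
neighbourhood of it on the unit sphere, i.e. on a cone of small angle around `w̃₁`; the opposite
cone gives the negative sign.
-/

open scoped RealInnerProductSpace

section InnerProductSpace

variable {E : Type*} [NormedAddCommGroup E] [InnerProductSpace ℝ E]

lemma exists_forall_inner_pos_of_inner_pos {Ψ u : E} (h : 0 < ⟪Ψ, u⟫) :
    ∃ ε > 0, ∀ x : E, (1 - ε) * (‖x‖ * ‖u‖) < ⟪x, u⟫ → 0 < ⟪Ψ, x⟫ := by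
  have hu : u ≠ 0 := by rintro rfl; simp at h
  have hΨû : 0 < ⟪Ψ, ‖u‖⁻¹ • u⟫ := by
    rw [real_inner_smul_right]; exact mul_pos (by positivity) h
  obtain ⟨δ, hδ, hball⟩ := Metric.eventually_nhds_iff.1 <|
    continuousAt_const.eventually_lt (continuous_const.inner continuous_id).continuousAt hΨû
  refine ⟨δ ^ 2 / 2, by positivity, fun x hx => ?_⟩
  have hx0 : x ≠ 0 := by rintro rfl; simp at hx
  have hcos : 1 - δ ^ 2 / 2 < ‖x‖⁻¹ * (‖u‖⁻¹ * ⟪x, u⟫) := by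
    rw [← mul_assoc, ← mul_inv, inv_mul_eq_div, lt_div_iff₀ (by positivity)]; exact hx
  have hdist : dist (‖x‖⁻¹ • x) (‖u‖⁻¹ • u) ^ 2 < δ ^ 2 := by
    rw [dist_eq_norm, norm_sub_sq_real, norm_smul, norm_smul, norm_inv, norm_inv, norm_norm,
      norm_norm, inv_mul_cancel₀ (norm_ne_zero_iff.2 hx0), inv_mul_cancel₀ (norm_ne_zero_iff.2 hu),
      real_inner_smul_left, real_inner_smul_right]
    linarith
  have hΨx := hball (lt_of_pow_lt_pow_left₀ 2 hδ.le hdist)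
  rw [id, real_inner_smul_right] at hΨx
  exact pos_of_mul_pos_right hΨx (by positivity)

lemma exists_forall_inner_pos_and_inner_neg_of_inner_pos {Ψ u : E} (h : 0 < ⟪Ψ, u⟫) :
    ∃ ε > 0, ∀ x : E,
      ((1 - ε) * (‖x‖ * ‖u‖) < ⟪x, u⟫ → 0 < ⟪Ψ, x⟫) ∧
      (⟪x, u⟫ < (-1 + ε) * (‖x‖ * ‖u‖) → ⟪Ψ, x⟫ < 0) := by
  obtain ⟨ε, hε, hpos⟩ := exists_forall_inner_pos_of_inner_pos h
  refine ⟨ε, hε, fun x => ⟨hpos x, fun hx => ?_⟩⟩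
  have hnx := hpos (-x) (by rw [norm_neg, inner_neg_left]; linarith)
  rwa [inner_neg_right, neg_pos] at hnx

end InnerProductSpace

section EuclideanBridge

variable {n : ℕ}

lemma inner_toLp_eq_dotProduct (x y : Fin n → ℝ) :
    ⟪(WithLp.toLp 2 x : EuclideanSpace ℝ (Fin n)), WithLp.toLp 2 y⟫ = x ⬝ᵥ y := by
  simp [EuclideanSpace.inner_eq_star_dotProduct, dotProduct_comm]

lemma norm_toLp_eq_eNorm (x : Fin n → ℝ) :
    ‖(WithLp.toLp 2 x : EuclideanSpace ℝ (Fin n))‖ = eNorm x := by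
  rw [EuclideanSpace.norm_eq, eNorm]; simp [dotProduct, sq]

end EuclideanBridge

section Demean

variable {n : ℕ}

lemma dotProduct_demean_of_dotProduct_onesVec_eq_zero {v : Fin n → ℝ}
    (hv : v ⬝ᵥ onesVec n = 0) (z : Fin n → ℝ) : v ⬝ᵥ demean z = v ⬝ᵥ z := by
  rw [demean, dotProduct_sub, dotProduct_smul, hv, smul_zero, sub_zero]

lemma demean_ne_zero {u v : Fin n → ℝ} (hv : v ≠ 0) (huv : u ⬝ᵥ v = 0)
    (hu : u ⬝ᵥ onesVec n ≠ 0) : demean v ≠ 0 := by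
  intro hdemean
  have hconst : v = ((v ⬝ᵥ onesVec n) / n) • onesVec n := sub_eq_zero.1 hdemean
  rw [hconst, dotProduct_smul, smul_eq_mul, mul_eq_zero, or_iff_left hu] at huv
  exact hv (by rw [hconst, huv, zero_smul])

end Demean

section Psi

variable {n : ℕ} [NeZero n] (w : Fin n → Fin n → ℝ) (lam : Fin n → ℝ)

lemma psiVec_dotProduct (z : Fin n → ℝ) :
    psiVec w lam ⬝ᵥ z = ∑ i ∈ Finset.univ.erase 0, (w i ⬝ᵥ onesVec n) / (1 - lam i / lam 0) *
      ((w i ⬝ᵥ onesVec n) * (w 0 ⬝ᵥ z) - (w 0 ⬝ᵥ onesVec n) * (w i ⬝ᵥ z)) := by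
  simp only [psiVec, sub_dotProduct, smul_dotProduct, sum_dotProduct, smul_eq_mul,
    Finset.sum_mul, ← Finset.sum_sub_distrib, mul_sub]
  refine Finset.sum_congr rfl fun i _ => ?_
  ring

lemma psiVec_dotProduct_onesVec : psiVec w lam ⬝ᵥ onesVec n = 0 := by
  rw [psiVec_dotProduct]
  exact Finset.sum_eq_zero fun i _ => by ring

variable {w lam}

lemma psiVec_dotProduct_w_zero (horth : ∀ i j, w i ⬝ᵥ w j = if i = j then (1 : ℝ) else 0) :
    psiVec w lam ⬝ᵥ w 0 =
      ∑ i ∈ Finset.univ.erase 0, (w i ⬝ᵥ onesVec n) ^ 2 / (1 - lam i / lam 0) := by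
  rw [psiVec_dotProduct]
  refine Finset.sum_congr rfl fun i hi => ?_
  rw [horth, horth, if_pos rfl, if_neg (Finset.ne_of_mem_erase hi)]
  ring

lemma psiVec_dotProduct_w_zero_pos
    (horth : ∀ i j, w i ⬝ᵥ w j = if i = j then (1 : ℝ) else 0)
    (hgap : ∀ i, i ≠ 0 → lam i < lam 0) (hlam0 : 0 < lam 0)
    (hreg : ∃ i : Fin n, i ≠ 0 ∧ w i ⬝ᵥ onesVec n ≠ 0) :
    0 < psiVec w lam ⬝ᵥ w 0 := by
  have hden : ∀ i, i ≠ 0 → 0 < 1 - lam i / lam 0 := fun i hi =>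
    sub_pos.2 ((div_lt_one hlam0).2 (hgap i hi))
  obtain ⟨i₀, hi₀, hw⟩ := hreg
  rw [psiVec_dotProduct_w_zero horth]
  refine Finset.sum_pos' (fun i hi => ?_) ⟨i₀, Finset.mem_erase.2 ⟨hi₀, Finset.mem_univ _⟩, ?_⟩
  · exact div_nonneg (sq_nonneg _) (hden i (Finset.ne_of_mem_erase hi)).le
  · exact div_pos (sq_pos_of_ne_zero hw) (hden i₀ hi₀)

end Psi

theorem stmt15_general {n : ℕ} [NeZero n]
    (w : Fin n → Fin n → ℝ) (lam : Fin n → ℝ)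
    (horth : ∀ i j, w i ⬝ᵥ w j = if i = j then (1 : ℝ) else 0)
    (hgap : ∀ i, i ≠ 0 → lam i < lam 0)
    (hlam0 : 0 < lam 0) :
    (psiVec w lam ⬝ᵥ onesVec n = 0) ∧
    ((∃ i : Fin n, i ≠ 0 ∧ w i ⬝ᵥ onesVec n ≠ 0) →
      demean (w 0) ≠ 0 ∧ 0 < psiVec w lam ⬝ᵥ demean (w 0)) ∧
    ((∃ i : Fin n, i ≠ 0 ∧ w i ⬝ᵥ onesVec n ≠ 0) →
      ∃ ε > (0 : ℝ), ∀ a : Fin n → ℝ, demean a ≠ 0 →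
        (((1 - ε) * (eNorm (demean a) * eNorm (demean (w 0))) <
            demean a ⬝ᵥ demean (w 0) → 0 < psiVec w lam ⬝ᵥ a) ∧
          (demean a ⬝ᵥ demean (w 0) <
            (-1 + ε) * (eNorm (demean a) * eNorm (demean (w 0))) →
            psiVec w lam ⬝ᵥ a < 0))) := by
  have hψones := psiVec_dotProduct_onesVec w lam
  have hψdemean := dotProduct_demean_of_dotProduct_onesVec_eq_zero hψones
  have hii : (∃ i : Fin n, i ≠ 0 ∧ w i ⬝ᵥ onesVec n ≠ 0) →
      demean (w 0) ≠ 0 ∧ 0 < psiVec w lam ⬝ᵥ demean (w 0) := by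
    rintro ⟨i, hi, hw⟩
    have hw0 : w 0 ≠ 0 := fun h => by simpa [h] using horth 0 0
    refine ⟨demean_ne_zero hw0 (by rw [horth, if_neg hi]) hw, ?_⟩
    rw [hψdemean]
    exact psiVec_dotProduct_w_zero_pos horth hgap hlam0 ⟨i, hi, hw⟩
  refine ⟨hψones, hii, fun hreg => ?_⟩
  have hpos := (hii hreg).2
  rw [← inner_toLp_eq_dotProduct] at hpos
  obtain ⟨ε, hε, hcone⟩ := exists_forall_inner_pos_and_inner_neg_of_inner_pos hpos
  refine ⟨ε, hε, fun a _ => ?_⟩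
  simpa only [← hψdemean a, inner_toLp_eq_dotProduct, norm_toLp_eq_eNorm]
    using hcone (WithLp.toLp 2 (demean a))

theorem stmt15 {n : ℕ} [NeZero n]
    (G : Matrix (Fin n) (Fin n) ℝ) (hGsym : G.IsSymm)
    (hGnn : ∀ i j, 0 ≤ G i j) (hGdiag : ∀ i, G i i = 0)
    (w : Fin n → Fin n → ℝ) (lam : Fin n → ℝ)
    (horth : ∀ i j, w i ⬝ᵥ w j = if i = j then (1 : ℝ) else 0)
    (heig : ∀ i, G *ᵥ w i = lam i • w i)
    (hgap : ∀ i, i ≠ 0 → lam i < lam 0)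
    (hlam0 : 0 < lam 0)
    (hw0 : ∀ k, 0 < w 0 k) :
    (psiVec w lam ⬝ᵥ onesVec n = 0) ∧
    ((∃ i : Fin n, i ≠ 0 ∧ w i ⬝ᵥ onesVec n ≠ 0) →
      demean (w 0) ≠ 0 ∧ 0 < psiVec w lam ⬝ᵥ demean (w 0)) ∧
    ((∃ i : Fin n, i ≠ 0 ∧ w i ⬝ᵥ onesVec n ≠ 0) →
      ∃ ε > (0 : ℝ), ∀ a : Fin n → ℝ, demean a ≠ 0 →
        (((1 - ε) * (eNorm (demean a) * eNorm (demean (w 0))) <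
            demean a ⬝ᵥ demean (w 0) → 0 < psiVec w lam ⬝ᵥ a) ∧
          (demean a ⬝ᵥ demean (w 0) <
            (-1 + ε) * (eNorm (demean a) * eNorm (demean (w 0))) →
            psiVec w lam ⬝ᵥ a < 0))) :=
  stmt15_general w lam horth hgap hlam0
end

section
/- Assume c = 0, a is not proportional to 𝟙, and 𝟙 is not an eigenvector of G (G is non-regular). Then there exists δ̂ ∈ (0, 1/λ₁] such that for every δ ∈ [0, δ̂): V(p⁰(δ), δ) > V(p^ur, δ) and Π(p⁰(δ), δ) < Π(p^ur, δ); that is, for sufficiently weak spillovers, banning price discrimination harms the firm but benefits consumers. -/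
open Matrix

/-!
At `δ = 0` the matrix `H` is the identity, so profit and surplus are Euclidean quadratics in the
price. The uniform price `p⁰(0)` is the orthogonal projection of `p^ur = a / 2` onto the line
`ℝ 𝟙`, and with `d = p⁰(0) - p^ur` uniform pricing costs the firm `‖d‖²` and gives consumers
`(3/2) ‖d‖²`; `d ≠ 0` because `a` is not proportional to `𝟙`. Both gaps are continuous in `δ` at
`0` because `δ ↦ (I - δ G)⁻¹` is, so they stay positive on some interval `[0, δ̂)`.
-/

open Filter Topology

lemma dotProduct_proj_sub_eq_zero {m : Type*} [Fintype m] (u v : m → ℝ) :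
    ((u ⬝ᵥ v) / (u ⬝ᵥ u)) • u ⬝ᵥ (((u ⬝ᵥ v) / (u ⬝ᵥ u)) • u - v) = 0 := by
  rcases eq_or_ne u 0 with rfl | hu
  · simp
  have huu : u ⬝ᵥ u ≠ 0 := mt dotProduct_self_eq_zero.mp hu
  simp only [smul_dotProduct, dotProduct_sub, dotProduct_smul, smul_eq_mul]
  field_simp
  ring

section Welfare

variable {n : ℕ} (G : Matrix (Fin n) (Fin n) ℝ)

lemma Hmat_zero : Hmat G 0 = 1 := by
  simp [Hmat]

lemma continuousAt_Hmat {δ₀ : ℝ} (h : IsUnit (1 - δ₀ • G).det) :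
    ContinuousAt (Hmat G) δ₀ :=
  ContinuousAt.comp (g := Inv.inv)
    (continuousAt_matrix_inv _ (NormedRing.inverse_continuousAt h.unit))
    (by fun_prop : ContinuousAt (fun δ : ℝ => 1 - δ • G) δ₀)

variable {G} {δ₀ : ℝ} (a : Fin n → ℝ)

lemma continuousAt_p0fn (hH : ContinuousAt (Hmat G) δ₀)
    (hden : onesVec n ⬝ᵥ (Hmat G δ₀ *ᵥ onesVec n) ≠ 0) :
    ContinuousAt (fun δ => p0fn G δ a) δ₀ := by
  have hquad : ∀ v, ContinuousAt (fun δ => onesVec n ⬝ᵥ (Hmat G δ *ᵥ v)) δ₀ := fun v =>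
    (continuous_const.dotProduct (continuous_id.matrix_mulVec continuous_const)).continuousAt.comp
      hH
  exact ((hquad _).div (hquad _) hden).smul continuousAt_const

lemma continuousAt_surplus {p : ℝ → Fin n → ℝ} (hH : ContinuousAt (Hmat G) δ₀)
    (hp : ContinuousAt p δ₀) : ContinuousAt (fun δ => surplus G δ a (p δ)) δ₀ := by
  have hF : Continuous fun q : (Fin n → ℝ) × Matrix (Fin n) (Fin n) ℝ =>
      (1 / 2 : ℝ) * ((a - q.1) ⬝ᵥ ((q.2 * q.2) *ᵥ (a - q.1))) :=
    have hv : Continuous fun q : (Fin n → ℝ) × Matrix (Fin n) (Fin n) ℝ => a - q.1 := by fun_prop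
    continuous_const.mul
      (hv.dotProduct ((continuous_snd.matrix_mul continuous_snd).matrix_mulVec hv))
  unfold surplus
  exact hF.continuousAt.comp (f := fun δ => (p δ, Hmat G δ)) (hp.prodMk hH)

lemma continuousAt_profit (c : Fin n → ℝ) {p : ℝ → Fin n → ℝ}
    (hH : ContinuousAt (Hmat G) δ₀) (hp : ContinuousAt p δ₀) :
    ContinuousAt (fun δ => profit G δ a c (p δ)) δ₀ := by
  have hF : Continuous fun q : (Fin n → ℝ) × Matrix (Fin n) (Fin n) ℝ =>
      (q.1 - c) ⬝ᵥ (q.2 *ᵥ (a - q.1)) := by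
    fun_prop
  exact hF.continuousAt.comp (hp.prodMk hH)

end Welfare

section AtZero

variable {n : ℕ} (G : Matrix (Fin n) (Fin n) ℝ) (a c p : Fin n → ℝ)

lemma profit_sub_profit_at_zero :
    profit G 0 a c (pUR a c) - profit G 0 a c p = (p - pUR a c) ⬝ᵥ (p - pUR a c) := by
  simp only [profit, Hmat_zero, one_mulVec, pUR, dotProduct, ← Finset.sum_sub_distrib]
  refine Finset.sum_congr rfl fun i _ => ?_
  simp only [Pi.sub_apply, Pi.smul_apply, Pi.add_apply, smul_eq_mul]
  ring

lemma surplus_sub_surplus_at_zero (hp : (p - c) ⬝ᵥ (p - pUR a c) = 0) :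
    surplus G 0 a p - surplus G 0 a (pUR a c) =
      3 / 2 * ((p - pUR a c) ⬝ᵥ (p - pUR a c)) := by
  simp only [surplus, Hmat_zero, one_mul, one_mulVec, pUR] at hp ⊢
  simp only [sub_dotProduct, dotProduct_sub, smul_dotProduct, dotProduct_smul, add_dotProduct,
    dotProduct_add, smul_eq_mul] at hp ⊢
  rw [dotProduct_comm c a, dotProduct_comm p a, dotProduct_comm c p] at *
  linear_combination (-1 : ℝ) * hp

end AtZero

lemma p0fn_zero {n : ℕ} (G : Matrix (Fin n) (Fin n) ℝ) (a : Fin n → ℝ) :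
    p0fn G 0 a =
      ((onesVec n ⬝ᵥ pUR a 0) / (onesVec n ⬝ᵥ onesVec n)) • onesVec n := by
  simp [p0fn, Hmat_zero]

lemma p0fn_zero_ne_pUR {n : ℕ} (G : Matrix (Fin n) (Fin n) ℝ) {a : Fin n → ℝ}
    (ha : ¬ ∃ t : ℝ, a = t • onesVec n) : p0fn G 0 a ≠ pUR a 0 := by
  intro h
  refine ha ⟨2 * ((onesVec n ⬝ᵥ pUR a 0) / (onesVec n ⬝ᵥ onesVec n)), ?_⟩
  rw [mul_smul, ← p0fn_zero G a, h, pUR, smul_smul]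
  norm_num

lemma onesVec_ne_zero_of_not_proportional {n : ℕ} {a : Fin n → ℝ}
    (ha : ¬ ∃ t : ℝ, a = t • onesVec n) : onesVec n ≠ 0 :=
  fun h => ha ⟨0, funext fun i => absurd (congrFun h i) one_ne_zero⟩

theorem stmt18_general {n : ℕ} (G : Matrix (Fin n) (Fin n) ℝ) (lam1 : ℝ) (hlam1pos : 0 < lam1)
    (a : Fin n → ℝ) (haprop : ¬ ∃ t : ℝ, a = t • onesVec n) :
    ∃ δhat ∈ Set.Ioc (0 : ℝ) (1 / lam1),
      ∀ δ ∈ Set.Ico (0 : ℝ) δhat,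
        surplus G δ a (pUR a 0) < surplus G δ a (p0fn G δ a) ∧
        profit G δ a 0 (p0fn G δ a) < profit G δ a 0 (pUR a 0) := by
  have hH : ContinuousAt (Hmat G) 0 := continuousAt_Hmat G (by simp)
  have hp0 : ContinuousAt (fun δ => p0fn G δ a) 0 :=
    continuousAt_p0fn a hH <| by
      simpa [Hmat_zero] using onesVec_ne_zero_of_not_proportional haprop
  have hgap : 0 < (p0fn G 0 a - pUR a 0) ⬝ᵥ (p0fn G 0 a - pUR a 0) :=
    lt_of_le_of_ne (dotProduct_self_star_nonneg _) <| Ne.symm <|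
      mt dotProduct_self_eq_zero.mp (sub_ne_zero.mpr (p0fn_zero_ne_pUR G haprop))
  have hsurplus : ∀ᶠ δ in 𝓝 0, surplus G δ a (pUR a 0) < surplus G δ a (p0fn G δ a) := by
    refine (continuousAt_surplus a hH continuousAt_const).eventually_lt
      (continuousAt_surplus a hH hp0) ?_
    have hproj : (p0fn G 0 a - 0) ⬝ᵥ (p0fn G 0 a - pUR a 0) = 0 := by
      rw [sub_zero, p0fn_zero]
      exact dotProduct_proj_sub_eq_zero _ _
    linarith [surplus_sub_surplus_at_zero G a 0 _ hproj]
  have hprofit : ∀ᶠ δ in 𝓝 0, profit G δ a 0 (p0fn G δ a) < profit G δ a 0 (pUR a 0) := by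
    refine (continuousAt_profit a 0 hH hp0).eventually_lt
      (continuousAt_profit a 0 hH continuousAt_const) ?_
    linarith [profit_sub_profit_at_zero G a 0 (p0fn G 0 a)]
  obtain ⟨u, hu, hsub⟩ :=
    mem_nhdsGE_iff_exists_Ico_subset.mp (nhdsWithin_le_nhds (hsurplus.and hprofit))
  exact ⟨min u (1 / lam1), ⟨lt_min hu (by positivity), min_le_right _ _⟩,
    fun δ hδ => hsub ⟨hδ.1, hδ.2.trans_le (min_le_left _ _)⟩⟩

theorem stmt18 {n : ℕ} (hn : 1 ≤ n)
    (G : Matrix (Fin n) (Fin n) ℝ) (hGsym : G.IsSymm)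
    (hGnn : ∀ i j, 0 ≤ G i j) (hGdiag : ∀ i, G i i = 0)
    (lam1 : ℝ) (hlam1 : lam1 ∈ spectrum ℝ G)
    (hlam1max : ∀ μ ∈ spectrum ℝ G, μ ≤ lam1)
    (hlam1pos : 0 < lam1)
    (hpd : ∀ δ ∈ Set.Ico (0 : ℝ) (1 / lam1), (Hmat G δ).PosDef)
    (a : Fin n → ℝ) (ha : ∀ i, 0 < a i)
    (haprop : ¬ ∃ t : ℝ, a = t • onesVec n)
    (hnonreg : ¬ ∃ μ : ℝ, G *ᵥ onesVec n = μ • onesVec n) :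
    ∃ δhat ∈ Set.Ioc (0 : ℝ) (1 / lam1),
      ∀ δ ∈ Set.Ico (0 : ℝ) δhat,
        surplus G δ a (pUR a 0) < surplus G δ a (p0fn G δ a) ∧
        profit G δ a 0 (p0fn G δ a) < profit G δ a 0 (pUR a 0) :=
  stmt18_general G lam1 hlam1pos a haprop
end

section
/- Define the alternative consumer surplus V_AV(p) := (1/2)·(a − p)ᵀ H (a − p). For every τ ∈ [0, 1]: the price p⁺ := p^ur − √(1−τ)·(a−c)/2 satisfies Π(p⁺) = τ·Π(p^ur) and is the unique maximizer of V_AV over the set {p ∈ ℝⁿ : Π(p) ≥ τ·Π(p^ur)}; and the price p⁻ := p^ur + √(1−τ)·(a−c)/2 satisfies Π(p⁻) = τ·Π(p^ur) and is the unique minimizer of V_AV over the same set. Consequently, every p with Π(p) ≥ τ·Π(p^ur) satisfies (1 − √(1−τ))²·V_AV(p^ur) ≤ V_AV(p) ≤ (1 + √(1−τ))²·V_AV(p^ur). -/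
open Matrix

/-- Alternative consumer surplus V_AV(p) = (1/2)(a − p)ᵀ H (a − p). -/
noncomputable def surplusAV {n : ℕ} (G : Matrix (Fin n) (Fin n) ℝ) (δ : ℝ)
    (a p : Fin n → ℝ) : ℝ :=
  (1 / 2 : ℝ) * ((a - p) ⬝ᵥ (Hmat G δ *ᵥ (a - p)))

/-!
Since `H` is positive definite, `‖x‖ = √(xᵀ H x)` is a Euclidean norm. With `m = (a - c) / 2`
and `x = a - p` one has `Π(p) = ‖m‖² - ‖x - m‖²` and `V_AV(p) = ‖x‖² / 2`, so the constraint
`Π(p) ≥ τ Π(p^ur)` says that `x` lies in the ball of radius `√(1 - τ) ‖m‖` around `m = a - p^ur`.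
By the triangle inequality `‖x‖` then lies between `(1 ∓ √(1 - τ)) ‖m‖`, and equality in it forces
`x` to be collinear with `m`, i.e. `x = (1 ± √(1 - τ)) m`, which are the prices `p⁺` and `p⁻`.
-/

section Seminormed
variable {E : Type*} [SeminormedAddCommGroup E] {m x : E} {s : ℝ}

theorem norm_sub_le_mul_of_sq_le (hs : 0 ≤ s) (h : ‖x - m‖ ^ 2 ≤ s ^ 2 * ‖m‖ ^ 2) :
    ‖x - m‖ ≤ s * ‖m‖ :=
  (pow_le_pow_iff_left₀ (norm_nonneg _) (by positivity) two_ne_zero).mp (by rwa [mul_pow])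

theorem sq_norm_le_of_sq_norm_sub_le (hs : 0 ≤ s) (h : ‖x - m‖ ^ 2 ≤ s ^ 2 * ‖m‖ ^ 2) :
    ‖x‖ ^ 2 ≤ (1 + s) ^ 2 * ‖m‖ ^ 2 := by
  rw [← mul_pow]
  gcongr
  linarith [norm_le_norm_add_norm_sub' x m, norm_sub_le_mul_of_sq_le hs h]

theorem le_sq_norm_of_sq_norm_sub_le (hs₀ : 0 ≤ s) (hs₁ : s ≤ 1)
    (h : ‖x - m‖ ^ 2 ≤ s ^ 2 * ‖m‖ ^ 2) : (1 - s) ^ 2 * ‖m‖ ^ 2 ≤ ‖x‖ ^ 2 := by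
  rw [← mul_pow]
  have : 0 ≤ 1 - s := by linarith
  gcongr
  linarith [norm_le_norm_add_norm_sub' m x, norm_sub_rev x m, norm_sub_le_mul_of_sq_le hs₀ h]

end Seminormed

section InnerProductSpace
variable {F : Type*} [NormedAddCommGroup F] [InnerProductSpace ℝ F] {m x : F} {s : ℝ}

theorem eq_one_add_smul_of_sq_norm_eq (hs : 0 ≤ s) (h : ‖x - m‖ ^ 2 ≤ s ^ 2 * ‖m‖ ^ 2)
    (heq : ‖x‖ ^ 2 = (1 + s) ^ 2 * ‖m‖ ^ 2) : x = (1 + s) • m := by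
  rw [← mul_pow, sq_eq_sq₀ (norm_nonneg _) (by positivity)] at heq
  have hdist : ‖x - m‖ = s * ‖m‖ := by
    linarith [norm_le_norm_add_norm_sub' x m, norm_sub_le_mul_of_sq_le hs h]
  have hcol : ‖x - m‖ • m = ‖m‖ • (x - m) :=
    norm_add_eq_iff_real.mp (by rw [add_sub_cancel]; linarith)
  rcases eq_or_ne ‖m‖ 0 with hm | hm
  · rw [norm_eq_zero.mp hm, norm_eq_zero.mp (by rw [heq, hm, mul_zero] : ‖x‖ = 0), smul_zero]
  · rw [hdist, mul_comm, mul_smul] at hcol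
    linear_combination (norm := module) -(smul_right_injective F hm hcol)

theorem eq_one_sub_smul_of_sq_norm_eq (hs₀ : 0 ≤ s) (hs₁ : s ≤ 1)
    (h : ‖x - m‖ ^ 2 ≤ s ^ 2 * ‖m‖ ^ 2) (heq : ‖x‖ ^ 2 = (1 - s) ^ 2 * ‖m‖ ^ 2) :
    x = (1 - s) • m := by
  have : 0 ≤ 1 - s := by linarith
  rw [← mul_pow, sq_eq_sq₀ (norm_nonneg _) (by positivity)] at heq
  have hdist : ‖m - x‖ = s * ‖m‖ := by
    linarith [norm_le_norm_add_norm_sub' m x, norm_sub_rev x m, norm_sub_le_mul_of_sq_le hs₀ h]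
  have hcol : ‖m - x‖ • x = ‖x‖ • (m - x) :=
    norm_add_eq_iff_real.mp (by rw [add_sub_cancel]; linarith)
  rcases eq_or_ne ‖m‖ 0 with hm | hm
  · rw [norm_eq_zero.mp hm, norm_eq_zero.mp (by rw [heq, hm, mul_zero] : ‖x‖ = 0), smul_zero]
  · rw [hdist, heq, mul_comm s, mul_comm (1 - s), mul_smul, mul_smul] at hcol
    linear_combination (norm := module) smul_right_injective F hm hcol

end InnerProductSpace

namespace Matrix
variable {ι : Type*} [Fintype ι] {H : Matrix ι ι ℝ}

theorem smul_dotProduct_mulVec_smul (t : ℝ) (x : ι → ℝ) :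
    (t • x) ⬝ᵥ (H *ᵥ (t • x)) = t ^ 2 * (x ⬝ᵥ (H *ᵥ x)) := by
  rw [mulVec_smul, dotProduct_smul, smul_dotProduct, smul_eq_mul, smul_eq_mul]; ring

theorem IsSymm.dotProduct_mulVec_comm (hH : H.IsSymm) (x y : ι → ℝ) :
    x ⬝ᵥ (H *ᵥ y) = y ⬝ᵥ (H *ᵥ x) := by
  rw [dotProduct_mulVec, ← mulVec_transpose, hH.eq, dotProduct_comm]

theorem IsSymm.sub_dotProduct_mulVec_add (hH : H.IsSymm) (x y : ι → ℝ) :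
    (x - y) ⬝ᵥ (H *ᵥ (x + y)) = x ⬝ᵥ (H *ᵥ x) - y ⬝ᵥ (H *ᵥ y) := by
  simp only [mulVec_add, dotProduct_add, sub_dotProduct, hH.dotProduct_mulVec_comm y x]
  ring

namespace PosDef

/- The norm is `√(xᵀ H x)` from `Matrix.toNormedAddCommGroup`; its instances are passed
explicitly below because instance search would pick the sup norm of `ι → ℝ`. -/
theorem dotProduct_mulVec_self_eq_norm_sq (hH : H.PosDef) (x : ι → ℝ) :
    x ⬝ᵥ (H *ᵥ x) = @norm _ (H.toNormedAddCommGroup hH).toNorm x ^ 2 :=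
  (dotProduct_comm _ _).trans
    (@real_inner_self_eq_norm_sq _ (H.toNormedAddCommGroup hH).toSeminormedAddCommGroup
      (H.toInnerProductSpace hH.posSemidef) x)

variable {m x : ι → ℝ} {s : ℝ}

theorem dotProduct_mulVec_le_of_sub_le (hH : H.PosDef) (hs : 0 ≤ s)
    (h : (x - m) ⬝ᵥ (H *ᵥ (x - m)) ≤ s ^ 2 * (m ⬝ᵥ (H *ᵥ m))) :
    x ⬝ᵥ (H *ᵥ x) ≤ (1 + s) ^ 2 * (m ⬝ᵥ (H *ᵥ m)) := by
  simp only [hH.dotProduct_mulVec_self_eq_norm_sq] at h ⊢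
  exact @sq_norm_le_of_sq_norm_sub_le _ (H.toNormedAddCommGroup hH).toSeminormedAddCommGroup
    _ _ _ hs h

theorem le_dotProduct_mulVec_of_sub_le (hH : H.PosDef) (hs₀ : 0 ≤ s) (hs₁ : s ≤ 1)
    (h : (x - m) ⬝ᵥ (H *ᵥ (x - m)) ≤ s ^ 2 * (m ⬝ᵥ (H *ᵥ m))) :
    (1 - s) ^ 2 * (m ⬝ᵥ (H *ᵥ m)) ≤ x ⬝ᵥ (H *ᵥ x) := by
  simp only [hH.dotProduct_mulVec_self_eq_norm_sq] at h ⊢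
  exact @le_sq_norm_of_sq_norm_sub_le _ (H.toNormedAddCommGroup hH).toSeminormedAddCommGroup
    _ _ _ hs₀ hs₁ h

theorem eq_one_add_smul_of_dotProduct_mulVec_eq (hH : H.PosDef) (hs : 0 ≤ s)
    (h : (x - m) ⬝ᵥ (H *ᵥ (x - m)) ≤ s ^ 2 * (m ⬝ᵥ (H *ᵥ m)))
    (heq : x ⬝ᵥ (H *ᵥ x) = (1 + s) ^ 2 * (m ⬝ᵥ (H *ᵥ m))) : x = (1 + s) • m := by
  simp only [hH.dotProduct_mulVec_self_eq_norm_sq] at h heq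
  exact @eq_one_add_smul_of_sq_norm_eq _ (H.toNormedAddCommGroup hH)
    (H.toInnerProductSpace hH.posSemidef) _ _ _ hs h heq

theorem eq_one_sub_smul_of_dotProduct_mulVec_eq (hH : H.PosDef) (hs₀ : 0 ≤ s) (hs₁ : s ≤ 1)
    (h : (x - m) ⬝ᵥ (H *ᵥ (x - m)) ≤ s ^ 2 * (m ⬝ᵥ (H *ᵥ m)))
    (heq : x ⬝ᵥ (H *ᵥ x) = (1 - s) ^ 2 * (m ⬝ᵥ (H *ᵥ m))) : x = (1 - s) • m := by
  simp only [hH.dotProduct_mulVec_self_eq_norm_sq] at h heq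
  exact @eq_one_sub_smul_of_sq_norm_eq _ (H.toNormedAddCommGroup hH)
    (H.toInnerProductSpace hH.posSemidef) _ _ _ hs₀ hs₁ h heq

end PosDef

end Matrix

section Monopoly
variable {n : ℕ} {G : Matrix (Fin n) (Fin n) ℝ} {δ : ℝ} {a c : Fin n → ℝ}

local notation "m" => (1 / 2 : ℝ) • (a - c)

theorem pUR_eq_sub : pUR a c = a - m := by
  unfold pUR; module

theorem profit_eq_sub_s19 (hpd : (Hmat G δ).PosDef) (p : Fin n → ℝ) :
    profit G δ a c p = m ⬝ᵥ (Hmat G δ *ᵥ m) - (a - p - m) ⬝ᵥ (Hmat G δ *ᵥ (a - p - m)) := by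
  have hpc : p - c = m - (a - p - m) := by module
  have hap : a - p = m + (a - p - m) := by abel
  have := (isHermitian_iff_isSymm.mp hpd.isHermitian).sub_dotProduct_mulVec_add m (a - p - m)
  rwa [← hpc, ← hap] at this

theorem two_mul_surplusAV (p : Fin n → ℝ) :
    2 * surplusAV G δ a p = (a - p) ⬝ᵥ (Hmat G δ *ᵥ (a - p)) := by
  unfold surplusAV; ring

theorem a_sub_pUR : a - pUR a c = m := by
  rw [pUR_eq_sub, sub_sub_cancel]

theorem a_sub_pUR_sub_smul (t : ℝ) : a - (pUR a c - t • m) = (1 + t) • m := by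
  rw [pUR_eq_sub]; module

theorem profit_pUR_sub_smul (hpd : (Hmat G δ).PosDef) (t : ℝ) :
    profit G δ a c (pUR a c - t • m) = (1 - t ^ 2) * profit G δ a c (pUR a c) := by
  rw [profit_eq_sub_s19 hpd, profit_eq_sub_s19 hpd, a_sub_pUR_sub_smul, a_sub_pUR, sub_self,
    add_smul, one_smul, add_sub_cancel_left, smul_dotProduct_mulVec_smul t, zero_dotProduct]
  ring

theorem surplusAV_pUR_sub_smul (t : ℝ) :
    surplusAV G δ a (pUR a c - t • m) = (1 + t) ^ 2 * surplusAV G δ a (pUR a c) := by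
  unfold surplusAV
  rw [a_sub_pUR_sub_smul, a_sub_pUR, smul_dotProduct_mulVec_smul (1 + t)]
  ring

theorem two_mul_surplusAV_pUR : 2 * surplusAV G δ a (pUR a c) = m ⬝ᵥ (Hmat G δ *ᵥ m) := by
  rw [two_mul_surplusAV, a_sub_pUR]

variable {τ : ℝ} {p : Fin n → ℝ}

theorem dotProduct_sub_le_of_mul_profit_le (hpd : (Hmat G δ).PosDef) (hτ : τ ≤ 1)
    (hp : τ * profit G δ a c (pUR a c) ≤ profit G δ a c p) :
    (a - p - m) ⬝ᵥ (Hmat G δ *ᵥ (a - p - m)) ≤ √(1 - τ) ^ 2 * (m ⬝ᵥ (Hmat G δ *ᵥ m)) := by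
  rw [profit_eq_sub_s19 hpd, profit_eq_sub_s19 hpd, a_sub_pUR, sub_self, zero_dotProduct] at hp
  rw [Real.sq_sqrt (by linarith)]
  linarith

theorem surplusAV_le_of_mul_profit_le (hpd : (Hmat G δ).PosDef) (hτ : τ ≤ 1)
    (hp : τ * profit G δ a c (pUR a c) ≤ profit G δ a c p) :
    surplusAV G δ a p ≤ (1 + √(1 - τ)) ^ 2 * surplusAV G δ a (pUR a c) := by
  have := hpd.dotProduct_mulVec_le_of_sub_le (Real.sqrt_nonneg _)
    (dotProduct_sub_le_of_mul_profit_le hpd hτ hp)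
  rw [← two_mul_surplusAV, ← two_mul_surplusAV_pUR] at this
  linarith

theorem le_surplusAV_of_mul_profit_le (hpd : (Hmat G δ).PosDef) (hτ₀ : 0 ≤ τ) (hτ₁ : τ ≤ 1)
    (hp : τ * profit G δ a c (pUR a c) ≤ profit G δ a c p) :
    (1 - √(1 - τ)) ^ 2 * surplusAV G δ a (pUR a c) ≤ surplusAV G δ a p := by
  have := hpd.le_dotProduct_mulVec_of_sub_le (Real.sqrt_nonneg _)
    (Real.sqrt_le_one.mpr (by linarith)) (dotProduct_sub_le_of_mul_profit_le hpd hτ₁ hp)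
  rw [← two_mul_surplusAV, ← two_mul_surplusAV_pUR] at this
  linarith

theorem eq_pUR_sub_of_surplusAV_eq (hpd : (Hmat G δ).PosDef) (hτ : τ ≤ 1)
    (hp : τ * profit G δ a c (pUR a c) ≤ profit G δ a c p)
    (heq : surplusAV G δ a p = (1 + √(1 - τ)) ^ 2 * surplusAV G δ a (pUR a c)) :
    p = pUR a c - √(1 - τ) • m := by
  have := hpd.eq_one_add_smul_of_dotProduct_mulVec_eq (Real.sqrt_nonneg _)
    (dotProduct_sub_le_of_mul_profit_le hpd hτ hp)
    (by rw [← two_mul_surplusAV, ← two_mul_surplusAV_pUR]; linarith)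
  rw [pUR_eq_sub]
  linear_combination (norm := module) -this

theorem eq_pUR_add_of_surplusAV_eq (hpd : (Hmat G δ).PosDef) (hτ₀ : 0 ≤ τ) (hτ₁ : τ ≤ 1)
    (hp : τ * profit G δ a c (pUR a c) ≤ profit G δ a c p)
    (heq : surplusAV G δ a p = (1 - √(1 - τ)) ^ 2 * surplusAV G δ a (pUR a c)) :
    p = pUR a c + √(1 - τ) • m := by
  have := hpd.eq_one_sub_smul_of_dotProduct_mulVec_eq (Real.sqrt_nonneg _)
    (Real.sqrt_le_one.mpr (by linarith)) (dotProduct_sub_le_of_mul_profit_le hpd hτ₁ hp)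
    (by rw [← two_mul_surplusAV, ← two_mul_surplusAV_pUR]; linarith)
  rw [pUR_eq_sub]
  linear_combination (norm := module) -this

end Monopoly

theorem stmt19_general {n : ℕ}
    (G : Matrix (Fin n) (Fin n) ℝ)
    (δ : ℝ)
    (hpd : (Hmat G δ).PosDef)
    (a c : Fin n → ℝ) :
    ∀ τ ∈ Set.Icc (0 : ℝ) 1,
      (profit G δ a c (pUR a c - Real.sqrt (1 - τ) • ((1 / 2 : ℝ) • (a - c))) =
          τ * profit G δ a c (pUR a c) ∧
        (∀ p : Fin n → ℝ, τ * profit G δ a c (pUR a c) ≤ profit G δ a c p →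
          surplusAV G δ a p ≤
            surplusAV G δ a (pUR a c - Real.sqrt (1 - τ) • ((1 / 2 : ℝ) • (a - c)))) ∧
        (∀ p : Fin n → ℝ, τ * profit G δ a c (pUR a c) ≤ profit G δ a c p →
          surplusAV G δ a p =
            surplusAV G δ a (pUR a c - Real.sqrt (1 - τ) • ((1 / 2 : ℝ) • (a - c))) →
          p = pUR a c - Real.sqrt (1 - τ) • ((1 / 2 : ℝ) • (a - c)))) ∧
      (profit G δ a c (pUR a c + Real.sqrt (1 - τ) • ((1 / 2 : ℝ) • (a - c))) =
          τ * profit G δ a c (pUR a c) ∧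
        (∀ p : Fin n → ℝ, τ * profit G δ a c (pUR a c) ≤ profit G δ a c p →
          surplusAV G δ a (pUR a c + Real.sqrt (1 - τ) • ((1 / 2 : ℝ) • (a - c))) ≤
            surplusAV G δ a p) ∧
        (∀ p : Fin n → ℝ, τ * profit G δ a c (pUR a c) ≤ profit G δ a c p →
          surplusAV G δ a p =
            surplusAV G δ a (pUR a c + Real.sqrt (1 - τ) • ((1 / 2 : ℝ) • (a - c))) →
          p = pUR a c + Real.sqrt (1 - τ) • ((1 / 2 : ℝ) • (a - c)))) ∧
      (∀ p : Fin n → ℝ, τ * profit G δ a c (pUR a c) ≤ profit G δ a c p →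
        (1 - Real.sqrt (1 - τ)) ^ 2 * surplusAV G δ a (pUR a c) ≤ surplusAV G δ a p ∧
        surplusAV G δ a p ≤ (1 + Real.sqrt (1 - τ)) ^ 2 * surplusAV G δ a (pUR a c)) := by
  intro τ ⟨hτ₀, hτ₁⟩
  have hs : √(1 - τ) ^ 2 = 1 - τ := Real.sq_sqrt (by linarith)
  have hadd : pUR a c + √(1 - τ) • ((1 / 2 : ℝ) • (a - c)) =
      pUR a c - (-√(1 - τ)) • ((1 / 2 : ℝ) • (a - c)) := by
    rw [neg_smul, sub_neg_eq_add]
  refine ⟨⟨?_, fun p hp => ?_, fun p hp heq => ?_⟩, ⟨?_, fun p hp => ?_, fun p hp heq => ?_⟩,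
    fun p hp => ⟨le_surplusAV_of_mul_profit_le hpd hτ₀ hτ₁ hp,
      surplusAV_le_of_mul_profit_le hpd hτ₁ hp⟩⟩
  · rw [profit_pUR_sub_smul hpd, hs]; ring
  · rw [surplusAV_pUR_sub_smul]
    exact surplusAV_le_of_mul_profit_le hpd hτ₁ hp
  · exact eq_pUR_sub_of_surplusAV_eq hpd hτ₁ hp (heq.trans (surplusAV_pUR_sub_smul _))
  · rw [hadd, profit_pUR_sub_smul hpd, neg_sq, hs]; ring
  · rw [hadd, surplusAV_pUR_sub_smul, ← sub_eq_add_neg]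
    exact le_surplusAV_of_mul_profit_le hpd hτ₀ hτ₁ hp
  · refine eq_pUR_add_of_surplusAV_eq hpd hτ₀ hτ₁ hp (heq.trans ?_)
    rw [hadd, surplusAV_pUR_sub_smul, ← sub_eq_add_neg]

theorem stmt19 {n : ℕ} (hn : 1 ≤ n)
    (G : Matrix (Fin n) (Fin n) ℝ) (hGsym : G.IsSymm)
    (hGnn : ∀ i j, 0 ≤ G i j) (hGdiag : ∀ i, G i i = 0)
    (δ : ℝ) (hδ : 0 ≤ δ)
    (lam1 : ℝ) (hlam1 : lam1 ∈ spectrum ℝ G)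
    (hlam1max : ∀ μ ∈ spectrum ℝ G, μ ≤ lam1)
    (hA1 : 0 < 1 - δ * lam1)
    (hpd : (Hmat G δ).PosDef)
    (a c : Fin n → ℝ) (hac : ∀ i, c i < a i) :
    ∀ τ ∈ Set.Icc (0 : ℝ) 1,
      (profit G δ a c (pUR a c - Real.sqrt (1 - τ) • ((1 / 2 : ℝ) • (a - c))) =
          τ * profit G δ a c (pUR a c) ∧
        (∀ p : Fin n → ℝ, τ * profit G δ a c (pUR a c) ≤ profit G δ a c p →
          surplusAV G δ a p ≤
            surplusAV G δ a (pUR a c - Real.sqrt (1 - τ) • ((1 / 2 : ℝ) • (a - c)))) ∧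
        (∀ p : Fin n → ℝ, τ * profit G δ a c (pUR a c) ≤ profit G δ a c p →
          surplusAV G δ a p =
            surplusAV G δ a (pUR a c - Real.sqrt (1 - τ) • ((1 / 2 : ℝ) • (a - c))) →
          p = pUR a c - Real.sqrt (1 - τ) • ((1 / 2 : ℝ) • (a - c)))) ∧
      (profit G δ a c (pUR a c + Real.sqrt (1 - τ) • ((1 / 2 : ℝ) • (a - c))) =
          τ * profit G δ a c (pUR a c) ∧
        (∀ p : Fin n → ℝ, τ * profit G δ a c (pUR a c) ≤ profit G δ a c p →
          surplusAV G δ a (pUR a c + Real.sqrt (1 - τ) • ((1 / 2 : ℝ) • (a - c))) ≤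
            surplusAV G δ a p) ∧
        (∀ p : Fin n → ℝ, τ * profit G δ a c (pUR a c) ≤ profit G δ a c p →
          surplusAV G δ a p =
            surplusAV G δ a (pUR a c + Real.sqrt (1 - τ) • ((1 / 2 : ℝ) • (a - c))) →
          p = pUR a c + Real.sqrt (1 - τ) • ((1 / 2 : ℝ) • (a - c)))) ∧
      (∀ p : Fin n → ℝ, τ * profit G δ a c (pUR a c) ≤ profit G δ a c p →
        (1 - Real.sqrt (1 - τ)) ^ 2 * surplusAV G δ a (pUR a c) ≤ surplusAV G δ a p ∧
        surplusAV G δ a p ≤ (1 + Real.sqrt (1 - τ)) ^ 2 * surplusAV G δ a (pUR a c)) :=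
  stmt19_general G δ hpd a c
end
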